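/- Estimate on the commutator term: for all u ∈ ℓ²(V,μ), ‖P_{χ_n}[u]‖ ≤ 2β_n‖u‖, where β_n := d_{2n} p_{2n}/(μ_0 n), d_m := max over the ball B(x_0,m) of the vertex degree, and p_m := max over B(x_0,m) of max_y b(x,y). -/

import Mathlib

open scoped BigOperators

/-- The formal magnetic Laplacian on a weighted graph. -/
noncomputable def magLap {V : Type*} (μ : V → ℝ) (b : V → V → ℝ) (θ : V → V → ℝ)
    (u : V → ℂ) (x : V) : ℂ :=
  (μ x : ℂ)⁻¹ * ∑' y, (b x y : ℂ) * (u x - Complex.exp (Complex.I * (θ x y : ℝ)) * u y)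

/-- The term `P_ψ[u]`. -/
noncomputable def magP {V : Type*} (μ : V → ℝ) (b : V → V → ℝ) (θ : V → V → ℝ)
    (ψ u : V → ℂ) (x : V) : ℂ :=
  (μ x : ℂ)⁻¹ *
    ∑' y, (b x y : ℂ) * (ψ x - ψ y) * (u x - Complex.exp (Complex.I * (θ x y : ℝ)) * u y)

/-- The cut-off function `χ_n`. -/
noncomputable def cutoff {V : Type*} (dist : V → ℕ) (n : ℕ) (x : V) : ℝ :=
  min (max ((2 * (n : ℝ) - (dist x : ℝ)) / (n : ℝ)) 0) 1

/-- Squared norm in `ℓ²(V, μ)`. -/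
noncomputable def wnormSq {V : Type*} (μ : V → ℝ) (f : V → ℂ) : ℝ :=
  ∑' x, μ x * ‖f x‖ ^ 2

/-- Inner product in `ℓ²(V, μ)`. -/
noncomputable def wInner {V : Type*} (μ : V → ℝ) (f g : V → ℂ) : ℂ :=
  ∑' x, (μ x : ℂ) * f x * (starRingEnd ℂ) (g x)
/-!
Along an edge the cut-off changes by at most `1 / n`, and it vanishes outside `B(x₀, 2n)`,
so the symmetric kernel `k x y = b x y * |χ x - χ y|` has row sums at most
`d_{2n} p_{2n} / n ≤ β_n μ x`, while `μ x * |P_χ[u] x| ≤ ∑_y k x y * (|u x| + |u y|)`.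
A Schur test — Cauchy–Schwarz in each row, then symmetry of `k` to bound the column sums —
gives `‖P_χ[u]‖² ≤ (2 β_n)² ‖u‖²`.
-/

open Finset

lemma sq_sum_mul_add_le {ι : Type*} (s : Finset ι) {w g : ι → ℝ} (hw : ∀ i ∈ s, 0 ≤ w i)
    (a : ℝ) :
    (∑ i ∈ s, w i * (a + g i)) ^ 2 ≤ 2 * (∑ i ∈ s, w i) * ∑ i ∈ s, w i * (a ^ 2 + g i ^ 2) := by
  calc (∑ i ∈ s, w i * (a + g i)) ^ 2
      ≤ (∑ i ∈ s, w i) * ∑ i ∈ s, w i * (a + g i) ^ 2 :=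
        sum_sq_le_sum_mul_sum_of_sq_le_mul s hw
          (fun i hi => mul_nonneg (hw i hi) (sq_nonneg _)) (fun i _ => le_of_eq (by ring))
    _ ≤ (∑ i ∈ s, w i) * ∑ i ∈ s, w i * (2 * (a ^ 2 + g i ^ 2)) := by
        gcongr with i hi
        · exact sum_nonneg hw
        · exact hw i hi
        · nlinarith [sq_nonneg (a - g i)]
    _ = 2 * (∑ i ∈ s, w i) * ∑ i ∈ s, w i * (a ^ 2 + g i ^ 2) := by
        simp_rw [mul_left_comm (w _) (2 : ℝ), ← mul_sum]
        ring

lemma sum_le_sum_of_eq_zero_off {ι : Type*} {f : ι → ℝ} {s : Finset ι} (hf : ∀ i ∈ s, 0 ≤ f i)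
    (hoff : ∀ i ∉ s, f i = 0) (t : Finset ι) : ∑ i ∈ t, f i ≤ ∑ i ∈ s, f i := by
  classical
  calc ∑ i ∈ t, f i = ∑ i ∈ t ∩ s, f i :=
        (sum_subset inter_subset_left fun i hi his =>
          hoff i fun hs => his (mem_inter.2 ⟨hi, hs⟩)).symm
    _ ≤ ∑ i ∈ s, f i := sum_le_sum_of_subset_of_nonneg inter_subset_right fun i hi _ => hf i hi

section Kernel

variable {V : Type*} {μ : V → ℝ} {k : V → V → ℝ} {F : V → Finset V} {c : ℝ}

lemma sum_sum_kernel_mul_le (hk : ∀ x y, 0 ≤ k x y) (hsymm : ∀ x y, k x y = k y x)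
    (hsupp : ∀ x y, y ∉ F x → k x y = 0) (hrow : ∀ x, ∑ y ∈ F x, k x y ≤ c * μ x) (hc : 0 ≤ c)
    {h : V → ℝ} (hh : ∀ y, 0 ≤ h y) {N : ℝ} (hN : ∀ s : Finset V, ∑ y ∈ s, μ y * h y ≤ N)
    (t : Finset V) : ∑ x ∈ t, ∑ y ∈ F x, k x y * h y ≤ c * N := by
  classical
  set Y := t.biUnion F
  calc ∑ x ∈ t, ∑ y ∈ F x, k x y * h y ≤ ∑ x ∈ t, ∑ y ∈ Y, k x y * h y :=
        sum_le_sum fun x hx => sum_le_sum_of_subset_of_nonneg (subset_biUnion_of_mem F hx)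
          fun y _ _ => mul_nonneg (hk x y) (hh y)
    _ = ∑ y ∈ Y, (∑ x ∈ t, k y x) * h y := by
        rw [sum_comm]
        exact sum_congr rfl fun y _ => by rw [sum_mul]; exact sum_congr rfl fun x _ => by rw [hsymm]
    _ ≤ ∑ y ∈ Y, c * (μ y * h y) := by
        refine sum_le_sum fun y _ => ?_
        have hcol := (sum_le_sum_of_eq_zero_off (fun x _ => hk y x) (hsupp y) t).trans (hrow y)
        rw [← mul_assoc]
        exact mul_le_mul_of_nonneg_right hcol (hh y)
    _ ≤ c * N := by
        rw [← mul_sum]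
        exact mul_le_mul_of_nonneg_left (hN Y) hc

lemma mul_sq_le_of_le_sum_kernel {x : V} (hμ : 0 < μ x) (hk : ∀ y, 0 ≤ k x y)
    (hrow : ∑ y ∈ F x, k x y ≤ c * μ x) {f : ℝ} (hf : 0 ≤ f) {g : V → ℝ}
    (hfg : μ x * f ≤ ∑ y ∈ F x, k x y * (g x + g y)) :
    μ x * f ^ 2 ≤ 2 * c * ∑ y ∈ F x, k x y * (g x ^ 2 + g y ^ 2) := by
  have hS : 0 ≤ ∑ y ∈ F x, k x y * (g x ^ 2 + g y ^ 2) :=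
    sum_nonneg fun y _ => mul_nonneg (hk y) (by positivity)
  refine le_of_mul_le_mul_left ?_ hμ
  calc μ x * (μ x * f ^ 2) = (μ x * f) ^ 2 := by ring
    _ ≤ (∑ y ∈ F x, k x y * (g x + g y)) ^ 2 := pow_le_pow_left₀ (mul_nonneg hμ.le hf) hfg 2
    _ ≤ 2 * (∑ y ∈ F x, k x y) * ∑ y ∈ F x, k x y * (g x ^ 2 + g y ^ 2) :=
        sq_sum_mul_add_le _ (fun y _ => hk y) _
    _ ≤ 2 * (c * μ x) * ∑ y ∈ F x, k x y * (g x ^ 2 + g y ^ 2) := by gcongr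
    _ = μ x * (2 * c * ∑ y ∈ F x, k x y * (g x ^ 2 + g y ^ 2)) := by ring

theorem tsum_mul_sq_le_of_schur (hμ : ∀ x, 0 < μ x) (hk : ∀ x y, 0 ≤ k x y)
    (hsymm : ∀ x y, k x y = k y x) (hsupp : ∀ x y, y ∉ F x → k x y = 0)
    (hrow : ∀ x, ∑ y ∈ F x, k x y ≤ c * μ x) (hc : 0 ≤ c) {f g : V → ℝ} (hf : ∀ x, 0 ≤ f x)
    (hg : Summable fun x => μ x * g x ^ 2)
    (hfg : ∀ x, μ x * f x ≤ ∑ y ∈ F x, k x y * (g x + g y)) :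
    ∑' x, μ x * f x ^ 2 ≤ (2 * c) ^ 2 * ∑' x, μ x * g x ^ 2 := by
  set N := ∑' x, μ x * g x ^ 2
  have hN : ∀ s : Finset V, ∑ y ∈ s, μ y * g y ^ 2 ≤ N := fun s =>
    hg.sum_le_tsum s fun y _ => mul_nonneg (hμ y).le (sq_nonneg _)
  refine Real.tsum_le_of_sum_le (fun x => mul_nonneg (hμ x).le (sq_nonneg _)) fun t => ?_
  have hdiag : ∑ x ∈ t, g x ^ 2 * ∑ y ∈ F x, k x y ≤ c * N :=
    calc ∑ x ∈ t, g x ^ 2 * ∑ y ∈ F x, k x y ≤ ∑ x ∈ t, c * (μ x * g x ^ 2) :=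
          sum_le_sum fun x _ =>
            (mul_le_mul_of_nonneg_left (hrow x) (sq_nonneg (g x))).trans_eq (by ring)
      _ ≤ c * N := by
          rw [← mul_sum]
          exact mul_le_mul_of_nonneg_left (hN t) hc
  calc ∑ x ∈ t, μ x * f x ^ 2
      ≤ ∑ x ∈ t, 2 * c * ∑ y ∈ F x, k x y * (g x ^ 2 + g y ^ 2) :=
        sum_le_sum fun x _ => mul_sq_le_of_le_sum_kernel (hμ x) (hk x) (hrow x) (hf x) (hfg x)
    _ = 2 * c * (∑ x ∈ t, g x ^ 2 * ∑ y ∈ F x, k x y + ∑ x ∈ t, ∑ y ∈ F x, k x y * g y ^ 2) := by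
        rw [← sum_add_distrib, ← mul_sum]
        refine congrArg _ (sum_congr rfl fun x _ => ?_)
        rw [mul_sum, ← sum_add_distrib]
        exact sum_congr rfl fun y _ => by ring
    _ ≤ 2 * c * (c * N + c * N) := by
        gcongr
        exact sum_sum_kernel_mul_le hk hsymm hsupp hrow hc (fun y => sq_nonneg (g y)) hN t
    _ = (2 * c) ^ 2 * N := by ring

end Kernel

section Graph

variable {V : Type*}

lemma mul_norm_magP_le {μ : V → ℝ} {b θ : V → V → ℝ} {x : V} (hμ : 0 < μ x)
    (hb : ∀ y, 0 ≤ b x y) {s : Finset V} (hs : ∀ y ∉ s, b x y = 0) (ψ u : V → ℂ) :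
    μ x * ‖magP μ b θ ψ u x‖ ≤ ∑ y ∈ s, b x y * ‖ψ x - ψ y‖ * (‖u x‖ + ‖u y‖) := by
  rw [magP, tsum_eq_sum (s := s) fun y hy => by simp [hs y hy], norm_mul, norm_inv,
    Complex.norm_real, Real.norm_eq_abs, abs_of_pos hμ, mul_inv_cancel_left₀ hμ.ne']
  refine (norm_sum_le _ _).trans (sum_le_sum fun y _ => ?_)
  rw [norm_mul, norm_mul, Complex.norm_real, Real.norm_eq_abs, abs_of_nonneg (hb y)]
  refine mul_le_mul_of_nonneg_left ?_ (mul_nonneg (hb y) (norm_nonneg _))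
  calc _ ≤ ‖u x‖ + ‖Complex.exp (Complex.I * (θ x y : ℝ)) * u y‖ := norm_sub_le _ _
    _ = ‖u x‖ + ‖u y‖ := by rw [norm_mul, Complex.norm_exp_I_mul_ofReal, one_mul]

lemma cutoff_eq_zero_of_le {d : V → ℕ} {n : ℕ} {x : V} (h : 2 * n ≤ d x) : cutoff d n x = 0 := by
  have hd : (2 * n : ℝ) ≤ d x := by exact_mod_cast h
  have : (2 * (n : ℝ) - d x) / n ≤ 0 := div_nonpos_of_nonpos_of_nonneg (by linarith) n.cast_nonneg
  rw [cutoff, max_eq_right this, min_eq_left zero_le_one]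

lemma abs_cutoff_sub_le (d : V → ℕ) (n : ℕ) (x y : V) :
    |cutoff d n x - cutoff d n y| ≤ |(d x : ℝ) - d y| / n :=
  calc |cutoff d n x - cutoff d n y|
      ≤ |max ((2 * (n : ℝ) - d x) / n) 0 - max ((2 * (n : ℝ) - d y) / n) 0| :=
        (abs_min_sub_min_le_max _ _ _ _).trans (by simp)
    _ ≤ |(2 * (n : ℝ) - d x) / n - (2 * (n : ℝ) - d y) / n| := abs_max_sub_max_le_abs _ _ _
    _ = |(d x : ℝ) - d y| / n := by
        rw [← sub_div, abs_div, Nat.abs_cast, abs_sub_comm]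
        ring_nf

lemma SimpleGraph.Adj.abs_dist_sub_dist_le_one {G : SimpleGraph V} {v w : V} (h : G.Adj v w)
    (u : V) : |(G.dist u v : ℝ) - G.dist u w| ≤ 1 := by
  have := h.diff_dist_adj (u := u)
  have h₁ : (G.dist u v : ℝ) ≤ G.dist u w + 1 := by
    exact_mod_cast (by omega : G.dist u v ≤ G.dist u w + 1)
  have h₂ : (G.dist u w : ℝ) ≤ G.dist u v + 1 := by
    exact_mod_cast (by omega : G.dist u w ≤ G.dist u v + 1)
  exact abs_sub_le_iff.2 ⟨by linarith, by linarith⟩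

lemma sum_mul_norm_cutoff_sub_le {b : V → V → ℝ} {G : SimpleGraph V} {x₀ : V}
    {n : ℕ} {d p : ℝ} (hloc : ∀ x, {y | 0 < b x y}.Finite) (hG : ∀ x y, G.Adj x y ↔ 0 < b x y)
    (hdeg : ∀ x, G.dist x₀ x ≤ 2 * n → ({y | 0 < b x y}.ncard : ℝ) ≤ d)
    (hwt : ∀ x y, G.dist x₀ x ≤ 2 * n → b x y ≤ p) (hd : 0 ≤ d) (hp : 0 ≤ p) (x : V) :
    ∑ y ∈ (hloc x).toFinset,
        b x y * ‖(cutoff (G.dist x₀) n x : ℂ) - cutoff (G.dist x₀) n y‖ ≤ d * p / n := by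
  by_cases hx : G.dist x₀ x ≤ 2 * n
  · calc _ ≤ ∑ y ∈ (hloc x).toFinset, p * (1 / n) := by
          refine sum_le_sum fun y hy => mul_le_mul (hwt x y hx) ?_ (norm_nonneg _) hp
          have hadj := (hG x y).2 ((hloc x).mem_toFinset.1 hy)
          rw [← Complex.ofReal_sub, Complex.norm_real, Real.norm_eq_abs]
          exact (abs_cutoff_sub_le _ n x y).trans
            (div_le_div_of_nonneg_right (hadj.abs_dist_sub_dist_le_one x₀) n.cast_nonneg)
      _ = (hloc x).toFinset.card * (p * (1 / n)) := by rw [sum_const, nsmul_eq_mul]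
      _ ≤ d * (p * (1 / n)) := by
          gcongr
          rw [← Set.ncard_eq_toFinset_card _ (hloc x)]
          exact hdeg x hx
      _ = d * p / n := by ring
  · have hfar : ∀ y ∈ (hloc x).toFinset,
        b x y * ‖(cutoff (G.dist x₀) n x : ℂ) - cutoff (G.dist x₀) n y‖ = 0 := by
      intro y hy
      have := ((hG x y).2 ((hloc x).mem_toFinset.1 hy)).diff_dist_adj (u := x₀)
      rw [cutoff_eq_zero_of_le (by omega : 2 * n ≤ G.dist x₀ x),
        cutoff_eq_zero_of_le (by omega : 2 * n ≤ G.dist x₀ y)]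
      simp
    rw [sum_eq_zero hfar]
    positivity

end Graph

section
variable {V : Type*} [Countable V] (μ : V → ℝ) (μ₀ : ℝ) (b : V → V → ℝ) (θ : V → V → ℝ)
  (G : SimpleGraph V) (x₀ : V) (D P : ℕ → ℝ)

theorem P_cutoff_estimate
    (hμ0 : 0 < μ₀) (hμ : ∀ x, μ₀ ≤ μ x)
    (hbsymm : ∀ x y, b x y = b y x) (hbnn : ∀ x y, 0 ≤ b x y)
    (hloc : ∀ x, {y | 0 < b x y}.Finite)
    (hG : ∀ x y, G.Adj x y ↔ 0 < b x y)
    (hD : ∀ (m : ℕ) (x : V), G.dist x₀ x ≤ m → ({y | 0 < b x y}.ncard : ℝ) ≤ D m)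
    (hP : ∀ (m : ℕ) (x y : V), G.dist x₀ x ≤ m → b x y ≤ P m)
    (n : ℕ)
    (u : V → ℂ) (hu : Summable fun x => μ x * ‖u x‖ ^ 2) :
    Real.sqrt (wnormSq μ (magP μ b θ (fun x => (cutoff (fun z => G.dist x₀ z) n x : ℂ)) u))
      ≤ 2 * (D (2 * n) * P (2 * n) / (μ₀ * n)) * Real.sqrt (wnormSq μ u) := by
  set ψ : V → ℂ := fun x => (cutoff (fun z => G.dist x₀ z) n x : ℂ)
  set β := D (2 * n) * P (2 * n) / (μ₀ * n) with hβ_def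
  have hμpos : ∀ x, 0 < μ x := fun x => hμ0.trans_le (hμ x)
  have hD0 : 0 ≤ D (2 * n) := (Nat.cast_nonneg _).trans (hD _ x₀ (by simp))
  have hP0 : 0 ≤ P (2 * n) := (hbnn x₀ x₀).trans (hP _ x₀ x₀ (by simp))
  have hβ : 0 ≤ β := div_nonneg (mul_nonneg hD0 hP0) (by positivity)
  have hsupp : ∀ x y, y ∉ (hloc x).toFinset → b x y = 0 := fun x y hy =>
    le_antisymm (not_lt.1 fun h => hy ((hloc x).mem_toFinset.2 h)) (hbnn x y)
  have hrow : ∀ x, ∑ y ∈ (hloc x).toFinset, b x y * ‖ψ x - ψ y‖ ≤ β * μ x := fun x =>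
    calc _ ≤ D (2 * n) * P (2 * n) / n :=
          sum_mul_norm_cutoff_sub_le hloc hG (hD _) (hP _) hD0 hP0 x
      _ = β * μ₀ := by rw [hβ_def, mul_comm μ₀, ← div_div, div_mul_cancel₀ _ hμ0.ne']
      _ ≤ β * μ x := mul_le_mul_of_nonneg_left (hμ x) hβ
  have key : wnormSq μ (magP μ b θ ψ u) ≤ (2 * β) ^ 2 * wnormSq μ u :=
    tsum_mul_sq_le_of_schur (k := fun x y => b x y * ‖ψ x - ψ y‖) hμpos
      (fun x y => mul_nonneg (hbnn x y) (norm_nonneg _)) (fun x y => by rw [hbsymm, norm_sub_rev])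
      (fun x y hy => by rw [hsupp x y hy, zero_mul]) hrow hβ (fun x => norm_nonneg _) hu
      (fun x => mul_norm_magP_le (hμpos x) (hbnn x) (hsupp x) ψ u)
  calc √(wnormSq μ (magP μ b θ ψ u)) ≤ √((2 * β) ^ 2 * wnormSq μ u) := Real.sqrt_le_sqrt key
    _ = 2 * β * √(wnormSq μ u) := by rw [Real.sqrt_mul (sq_nonneg _), Real.sqrt_sq (by positivity)]

end
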